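/- arXiv:math/0212034 — 4 statements merged into one kernel-verified Lean document; each statement's English description precedes it below -/
import Mathlib

section
/- Let X be a Banach space, Ω ⊆ X a domain, and F a family of holomorphic functions f : Ω → ℂ that is uniformly bounded on Ω by a constant M. Then for every compact set K ⊆ Ω, every sequence in F has a subsequence that converges uniformly on K. -/
open Set Metric Filter
open scoped BoundedContinuousFunction
set_option synthInstance.maxHeartbeats 1000000
set_option maxHeartbeats 1000000

/-- **Montel-type theorem for uniformly bounded families on a Banach space.**
If `F` is a family of holomorphic functions on a domain `Ω` in a complex Banach
space, uniformly bounded by `M` on `Ω`, then every sequence in `F` has a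
subsequence converging uniformly on any given compact subset `K ⊆ Ω`. -/
theorem uniformly_bounded_family_subseq_uniform_on_compact
    {X : Type*} [NormedAddCommGroup X] [NormedSpace ℂ X] [CompleteSpace X]
    (Ω : Set X) (hΩ : IsOpen Ω) (hΩconn : IsConnected Ω)
    (F : Set (X → ℂ)) (hol : ∀ f ∈ F, DifferentiableOn ℂ f Ω)
    (M : ℝ) (hbd : ∀ f ∈ F, ∀ x ∈ Ω, ‖f x‖ ≤ M)
    (K : Set X) (hK : K ⊆ Ω) (hKc : IsCompact K)
    (u : ℕ → X → ℂ) (hu : ∀ n, u n ∈ F) :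
    ∃ σ : ℕ → ℕ, StrictMono σ ∧
      ∃ g : X → ℂ, TendstoUniformlyOn (fun n => u (σ n)) g atTop K := by
  classical
  obtain ⟨x₀, hx₀⟩ := hΩconn.nonempty
  have hM0 : 0 ≤ M := le_trans (norm_nonneg _) (hbd (u 0) (hu 0) x₀ hx₀)
  have hM1 : (0:ℝ) < 2 * M + 1 := by linarith
  -- Key Schwarz-type Lipschitz estimate
  have key : ∀ f ∈ F, ∀ x ∈ Ω, ∀ ε > (0:ℝ), ball x ε ⊆ Ω →
      ∀ y, dist y x < ε → dist (f y) (f x) ≤ (2 * M + 1) / ε * dist y x := by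
    intro f hf x hx ε hε hball y hy
    rcases eq_or_ne y x with rfl | hne
    · simp
    have hv : (0:ℝ) < ‖y - x‖ := by
      simpa [norm_sub_pos_iff] using sub_ne_zero.mpr hne
    set v : X := y - x with hvdef
    set R : ℝ := ε / ‖v‖ with hR
    have hR1 : (1:ℝ) < R := by
      rw [hR, lt_div_iff₀ hv]
      simpa [one_mul, dist_eq_norm] using hy
    have hR0 : (0:ℝ) < R := lt_trans one_pos hR1
    set φ : ℂ → ℂ := fun t => f (x + t • v) with hφ
    have hline : ∀ t : ℂ, t ∈ ball (0:ℂ) R → x + t • v ∈ ball x ε := by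
      intro t ht
      simp only [mem_ball, dist_eq_norm] at ht ⊢
      have : ‖x + t • v - x‖ = ‖t‖ * ‖v‖ := by
        simp [norm_smul]
      rw [this]
      calc ‖t‖ * ‖v‖ < R * ‖v‖ := by
            exact mul_lt_mul_of_pos_right (by simpa using ht) hv
        _ = ε := by rw [hR]; field_simp [hv.ne']
    have hdiff : DifferentiableOn ℂ φ (ball (0:ℂ) R) := by
      apply DifferentiableOn.comp (hol f hf)
      · intro t _
        exact DifferentiableWithinAt.const_add x
          ((differentiableWithinAt_id.smul_const v))
      · intro t ht
        exact hball (hline t ht)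
    have hmaps : MapsTo φ (ball (0:ℂ) R) (ball (φ 0) (2 * M + 1)) := by
      intro t ht
      have h1 : ‖φ t‖ ≤ M := hbd f hf _ (hball (hline t ht))
      have h2 : ‖φ 0‖ ≤ M :=
        hbd f hf _ (hball (hline 0 (by simpa using hR0)))
      have : dist (φ t) (φ 0) ≤ 2 * M := by
        calc dist (φ t) (φ 0) ≤ ‖φ t‖ + ‖φ 0‖ := dist_le_norm_add_norm _ _
          _ ≤ 2 * M := by linarith
      exact mem_ball.2 (lt_of_le_of_lt this (by linarith))
    have h1mem : (1:ℂ) ∈ ball (0:ℂ) R := by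
      simpa using hR1
    have := Complex.dist_le_div_mul_dist_of_mapsTo_ball hdiff (hmaps.mono_right ball_subset_closedBall) h1mem
    have hφ1 : φ 1 = f y := by simp [hφ, hvdef]
    have hφ0 : φ 0 = f x := by simp [hφ]
    rw [hφ1, hφ0] at this
    have hd10 : dist (1:ℂ) 0 = 1 := by simp
    rw [hd10, mul_one] at this
    calc dist (f y) (f x) ≤ (2 * M + 1) / R := this
      _ = (2 * M + 1) / ε * ‖v‖ := by
          rw [hR]; field_simp
      _ = (2 * M + 1) / ε * dist y x := by rw [dist_eq_norm, hvdef]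
  -- radii around points of K
  have hrad : ∀ x ∈ K, ∃ ε > (0:ℝ), ball x ε ⊆ Ω := fun x hx =>
    (Metric.isOpen_iff.1 hΩ x (hK hx)).imp fun ε ⟨hε, hb⟩ => ⟨hε, hb⟩
  haveI : CompactSpace ↥K := isCompact_iff_compactSpace.mp hKc
  -- the restricted family as bounded continuous functions
  have hcont : ∀ n, Continuous (fun x : ↥K => u n x) := by
    intro n
    exact ContinuousOn.restrict
      (((hol (u n) (hu n)).continuousOn).mono hK)
  let v : ℕ → (↥K →ᵇ ℂ) := fun n =>
    BoundedContinuousFunction.mkOfCompact ⟨fun x : ↥K => u n x, hcont n⟩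
  -- equicontinuity of the family `v`
  have heq : Equicontinuous (fun n => (v n : ↥K → ℂ)) := by
    intro x
    rw [Metric.equicontinuousAt_iff]
    intro ε hε
    obtain ⟨ε₁, hε₁, hball⟩ := hrad (x : X) x.2
    refine ⟨min ε₁ (ε * ε₁ / (2 * M + 1)), lt_min hε₁ (by positivity), ?_⟩
    intro y hy n
    have hy1 : dist (y : X) (x : X) < ε₁ :=
      lt_of_lt_of_le (by simpa [Subtype.dist_eq, dist_comm] using hy) (min_le_left _ _)
    have hy2 : dist (y : X) (x : X) < ε * ε₁ / (2 * M + 1) :=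
      lt_of_lt_of_le (by simpa [Subtype.dist_eq, dist_comm] using hy) (min_le_right _ _)
    have hle := key (u n) (hu n) (x : X) (hK x.2) ε₁ hε₁ hball (y : X) hy1
    have : (2 * M + 1) / ε₁ * dist (y : X) (x : X) < ε := by
      have := mul_lt_mul_of_pos_left hy2 (div_pos hM1 hε₁)
      calc (2 * M + 1) / ε₁ * dist (y : X) (x : X)
          < (2 * M + 1) / ε₁ * (ε * ε₁ / (2 * M + 1)) := this
        _ = ε := by field_simp
    have : dist (u n (y : X)) (u n (x : X)) < ε := lt_of_le_of_lt hle this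
    simpa [v, dist_comm] using this
  -- Arzelà–Ascoli
  have hA : IsCompact (closure (Set.range v)) := by
    apply BoundedContinuousFunction.arzela_ascoli (closedBall (0:ℂ) M)
      (isCompact_closedBall _ _)
    · rintro f x ⟨n, rfl⟩
      simpa [v] using hbd (u n) (hu n) (x : X) (hK x.2)
    · have hfun : (fun f : ↥(Set.range v) => ((f : ↥K →ᵇ ℂ) : ↥K → ℂ)) =
          (fun n => (v n : ↥K → ℂ)) ∘ (fun f : ↥(Set.range v) => f.2.choose) := by
        funext f
        exact (congrArg _ f.2.choose_spec).symm
      rw [hfun]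
      exact heq.comp _
  obtain ⟨g₀, _, σ, hσ, htend⟩ :=
    hA.tendsto_subseq (fun n => subset_closure (Set.mem_range_self n))
  refine ⟨σ, hσ, fun x => if h : x ∈ K then g₀ ⟨x, h⟩ else 0, ?_⟩
  rw [tendstoUniformlyOn_iff_tendstoUniformly_comp_coe]
  have htu : TendstoUniformly (fun n => ((v (σ n)) : ↥K → ℂ)) (g₀ : ↥K → ℂ) atTop :=
    BoundedContinuousFunction.tendsto_iff_tendstoUniformly.1 htend
  convert htu using 2
  funext x
  · rfl
  funext x
  simp [x.2]
end

section
/- Let Ω be a domain in ℂ and F a family of holomorphic functions on Ω such that for every piecewise-C¹ closed curve γ in Ω there is a uniform bound M_γ on |f| over the image of γ, for all f ∈ F. Then F is uniformly bounded on every compact subset of Ω; in particular the topology of uniform convergence on images of closed curves in Ω coincides with the topology of uniform convergence on compact subsets of Ω for holomorphic functions. -/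
open Set Metric Filter Real

/-- A map `γ : ℝ → ℂ` is a piecewise-`C¹` path on `[0,1]` if it is continuous on
`[0,1]` and `C¹` on each subinterval of some finite partition of `[0,1]`. -/
def PiecewiseC1Path (γ : ℝ → ℂ) : Prop :=
  ContinuousOn γ (Set.Icc 0 1) ∧
  ∃ (n : ℕ) (t : Fin (n + 1) → ℝ), StrictMono t ∧ t 0 = 0 ∧ t (Fin.last n) = 1 ∧
    ∀ i : Fin n, ContDiffOn ℝ 1 γ (Set.Icc (t i.castSucc) (t i.succ))

noncomputable def circPath (z₀ : ℂ) (r : ℝ) : ℝ → ℂ :=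
  fun t => z₀ + (r : ℂ) * Complex.exp (((2 * π * (t - 1/2) : ℝ) : ℂ) * Complex.I)

lemma circPath_contDiff (z₀ : ℂ) (r : ℝ) : ContDiff ℝ 1 (circPath z₀ r) := by
  apply ContDiff.add contDiff_const
  apply ContDiff.mul contDiff_const
  have hexp : ContDiff ℝ 1 Complex.exp := Complex.contDiff_exp
  apply hexp.comp
  apply ContDiff.mul _ contDiff_const
  exact Complex.ofRealCLM.contDiff.comp ((contDiff_const.mul (contDiff_id.sub contDiff_const)))

lemma circPath_piecewise (z₀ : ℂ) (r : ℝ) : PiecewiseC1Path (circPath z₀ r) := by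
  refine ⟨(circPath_contDiff z₀ r).continuous.continuousOn, 1, fun i => (i.val : ℝ),
    fun i j h => by
      show (i.val : ℝ) < (j.val : ℝ)
      exact_mod_cast Fin.lt_def.mp h, by norm_num, by norm_num [Fin.last],
    fun i => (circPath_contDiff z₀ r).contDiffOn⟩

lemma circPath_closed (z₀ : ℂ) (r : ℝ) : circPath z₀ r 0 = circPath z₀ r 1 := by
  unfold circPath
  congr 2
  have h0 : ((2 * π * ((0:ℝ) - 1/2) : ℝ) : ℂ) = -(π : ℂ) := by push_cast; ring
  have h1 : ((2 * π * ((1:ℝ) - 1/2) : ℝ) : ℂ) = (π : ℂ) := by push_cast; ring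
  rw [h0, h1, neg_mul, Complex.exp_neg, Complex.exp_pi_mul_I]
  norm_num

lemma circPath_image (z₀ : ℂ) {r : ℝ} (hr : 0 < r) :
    circPath z₀ r '' Set.Icc 0 1 = sphere z₀ r := by
  apply Set.eq_of_subset_of_subset
  · rintro w ⟨t, _, rfl⟩
    simp only [mem_sphere, circPath, dist_eq_norm]
    rw [add_sub_cancel_left]
    rw [norm_mul, Complex.norm_exp_ofReal_mul_I]
    simp [abs_of_pos hr]
  · intro w hw
    have habs : ‖w - z₀‖ = r := by
      rw [mem_sphere, Complex.dist_eq] at hw; exact hw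
    have harg := Complex.arg_mem_Ioc (w - z₀)
    rw [Set.mem_Ioc] at harg
    have hπ : (0:ℝ) < π := Real.pi_pos
    refine ⟨Complex.arg (w - z₀) / (2 * π) + 1/2, ⟨?_, ?_⟩, ?_⟩
    · have h1 : -(1/2 : ℝ) ≤ Complex.arg (w - z₀) / (2 * π) := by
        rw [le_div_iff₀ (by positivity : (0:ℝ) < 2*π)]; nlinarith [harg.1]
      linarith
    · have h1 : Complex.arg (w - z₀) / (2 * π) ≤ 1/2 := by
        rw [div_le_iff₀ (by positivity : (0:ℝ) < 2*π)]; nlinarith [harg.2]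
      linarith
    · have ht : (2 * π * ((Complex.arg (w - z₀) / (2 * π) + 1/2) - 1/2) : ℝ)
          = Complex.arg (w - z₀) := by field_simp; ring
      simp only [circPath, ht]
      rw [show ((r:ℂ)) = ((‖w - z₀‖ : ℝ) : ℂ) by rw [habs],
        Complex.norm_mul_exp_arg_mul_I]
      ring

lemma maxmod {h : ℂ → ℂ} {z₀ : ℂ} {r C : ℝ} (hr : 0 < r)
    (hf : DifferentiableOn ℂ h (closedBall z₀ r))
    (hC : ∀ w ∈ sphere z₀ r, ‖h w‖ ≤ C) : ∀ z ∈ closedBall z₀ r, ‖h z‖ ≤ C := by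
  intro z hz
  have hcl : closure (ball z₀ r) = closedBall z₀ r := closure_ball z₀ hr.ne'
  refine Complex.norm_le_of_forall_mem_frontier_norm_le (U := ball z₀ r) isBounded_ball ?_ ?_ ?_
  · exact DifferentiableOn.diffContOnCl (by rwa [hcl])
  · rwa [frontier_ball z₀ hr.ne']
  · rwa [hcl]

/-- **Bounds on closed curves control compact sets.**  If a family of holomorphic
functions on a domain `Ω ⊆ ℂ` is uniformly bounded on the image of every
piecewise-`C¹` closed curve in `Ω`, then it is uniformly bounded on every compact
subset of `Ω`; moreover, for sequences of holomorphic functions, uniform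
convergence on images of all such closed curves coincides with uniform
convergence on all compact subsets of `Ω`. -/
theorem curve_bounds_give_compact_bounds
    (Ω : Set ℂ) (hΩ : IsOpen Ω) (hΩconn : IsConnected Ω)
    (F : Set (ℂ → ℂ)) (hol : ∀ f ∈ F, DifferentiableOn ℂ f Ω)
    (hbd : ∀ γ : ℝ → ℂ, PiecewiseC1Path γ → γ 0 = γ 1 → γ '' Set.Icc 0 1 ⊆ Ω →
      ∃ M : ℝ, ∀ f ∈ F, ∀ t ∈ Set.Icc (0 : ℝ) 1, ‖f (γ t)‖ ≤ M) :
    (∀ K : Set ℂ, K ⊆ Ω → IsCompact K → ∃ M : ℝ, ∀ f ∈ F, ∀ z ∈ K, ‖f z‖ ≤ M) ∧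
    (∀ (f : ℕ → ℂ → ℂ) (g : ℂ → ℂ), (∀ n, DifferentiableOn ℂ (f n) Ω) →
      DifferentiableOn ℂ g Ω →
      ((∀ γ : ℝ → ℂ, PiecewiseC1Path γ → γ 0 = γ 1 → γ '' Set.Icc 0 1 ⊆ Ω →
          TendstoUniformlyOn f g atTop (γ '' Set.Icc 0 1)) ↔
        (∀ K : Set ℂ, K ⊆ Ω → IsCompact K → TendstoUniformlyOn f g atTop K))) := by
  -- covering lemma
  have cover : ∀ K : Set ℂ, K ⊆ Ω → IsCompact K → ∃ (s : Finset ℂ) (r : ℂ → ℝ),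
      (∀ z ∈ s, 0 < r z ∧ closedBall z (r z) ⊆ Ω) ∧
      K ⊆ ⋃ z ∈ s, closedBall z (r z) := by
    intro K hKΩ hK
    have : ∀ z : ℂ, ∃ ρ : ℝ, z ∈ K → 0 < ρ ∧ closedBall z ρ ⊆ Ω := by
      intro z
      by_cases hz : z ∈ K
      · obtain ⟨ρ, hρ, hball⟩ := Metric.isOpen_iff.1 hΩ z (hKΩ hz)
        exact ⟨ρ/2, fun _ => ⟨by positivity,
          (closedBall_subset_ball (by linarith)).trans hball⟩⟩
      · exact ⟨1, fun h => absurd h hz⟩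
    choose r hr using this
    obtain ⟨s, hs, hcov⟩ := hK.elim_nhds_subcover (fun z => ball z (r z))
      (fun z hz => ball_mem_nhds _ (hr z hz).1)
    exact ⟨s, r, fun z hz => hr z (hs z hz),
      hcov.trans (Set.iUnion₂_mono fun z _ => ball_subset_closedBall)⟩
  -- the sphere bound from hbd
  have sphere_bd : ∀ (z : ℂ) (ρ : ℝ), 0 < ρ → closedBall z ρ ⊆ Ω →
      ∃ M : ℝ, ∀ f ∈ F, ∀ w ∈ sphere z ρ, ‖f w‖ ≤ M := by
    intro z ρ hρ hsub
    have himg := circPath_image z hρ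
    obtain ⟨M, hM⟩ := hbd (circPath z ρ) (circPath_piecewise z ρ) (circPath_closed z ρ)
      (by rw [himg]; exact (sphere_subset_closedBall).trans hsub)
    refine ⟨M, fun f hf w hw => ?_⟩
    rw [← himg] at hw
    obtain ⟨t, ht, rfl⟩ := hw
    exact hM f hf t ht
  constructor
  · intro K hKΩ hK
    obtain ⟨s, r, hs, hcov⟩ := cover K hKΩ hK
    have : ∀ z : ℂ, ∃ M : ℝ, z ∈ s → ∀ f ∈ F, ∀ w ∈ closedBall z (r z), ‖f w‖ ≤ M := by
      intro z
      by_cases hz : z ∈ s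
      · obtain ⟨M, hM⟩ := sphere_bd z (r z) (hs z hz).1 (hs z hz).2
        refine ⟨M, fun _ f hf w hw => ?_⟩
        exact maxmod (hs z hz).1 (((hol f hf)).mono (hs z hz).2) (hM f hf) w hw
      · exact ⟨0, fun h => absurd h hz⟩
    choose M hM using this
    obtain ⟨C, hC⟩ := Finset.exists_le (s.image M)
    refine ⟨C, fun f hf z hz => ?_⟩
    obtain ⟨w, hw, hzw⟩ := Set.mem_iUnion₂.1 (hcov hz)
    exact (hM w hw f hf z hzw).trans (hC _ (Finset.mem_image_of_mem M hw))
  · intro f g hf hg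
    constructor
    · intro hcurve K hKΩ hK
      obtain ⟨s, r, hs, hcov⟩ := cover K hKΩ hK
      have hsph : ∀ z ∈ s, TendstoUniformlyOn f g atTop (sphere z (r z)) := by
        intro z hz
        have himg := circPath_image z (hs z hz).1
        rw [← himg]
        exact hcurve (circPath z (r z)) (circPath_piecewise z (r z)) (circPath_closed z (r z))
          (by rw [himg]; exact (sphere_subset_closedBall).trans (hs z hz).2)
      rw [Metric.tendstoUniformlyOn_iff]
      intro ε hε
      have key : ∀ᶠ n in atTop, ∀ z ∈ s, ∀ w ∈ sphere z (r z), dist (g w) (f n w) < ε/2 := by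
        rw [eventually_all_finset]
        intro z hz
        exact (Metric.tendstoUniformlyOn_iff.1 (hsph z hz)) (ε/2) (by linarith)
      filter_upwards [key] with n hn z hz
      obtain ⟨w, hw, hzw⟩ := Set.mem_iUnion₂.1 (hcov hz)
      have hdiff : DifferentiableOn ℂ (fun x => g x - f n x) (closedBall w (r w)) :=
        (hg.mono (hs w hw).2).sub ((hf n).mono (hs w hw).2)
      have hbound : ∀ x ∈ sphere w (r w), ‖g x - f n x‖ ≤ ε/2 := by
        intro x hx
        rw [← dist_eq_norm]
        exact (hn w hw x hx).le
      have := maxmod (hs w hw).1 hdiff hbound z hzw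
      rw [dist_eq_norm]
      linarith
    · intro hcpt γ hγ hγc hγΩ
      exact hcpt _ hγΩ (isCompact_Icc.image_of_continuousOn hγ.1)
end

section
/- Let B be the open unit ball of ℓ². For each k ≥ 2 define f_k : B → ℓ² by f_k(z) = Σ_{j<k} z_j e_j + (z_k + z_1²) e_k + Σ_{j>k} z_j e_j. Then each f_k is a biholomorphism of B onto its image, f_k converges pointwise weakly (and in fact coordinate-wise on compact sets) to the identity map of B as k → ∞, yet the closed ball centered at (77/80) e_1 of radius 1/100 is disjoint from f_k(B) for every k, while it is contained in the image B of the weak limit. -/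
open Set Metric Filter
open scoped ENNReal

/-- Evaluation at coordinate `j` as a continuous linear map on `ℓ²`. -/
noncomputable def evC (j : ℕ) : lp (fun _ : ℕ => ℂ) 2 →L[ℂ] ℂ :=
  LinearMap.mkContinuous
    { toFun := fun z => z j
      map_add' := fun x y => by simp [lp.coeFn_add]
      map_smul' := fun c x => by simp [lp.coeFn_smul] }
    1 (fun z => by
      exact (by simpa using lp.norm_apply_le_norm (by norm_num : (2:ℝ≥0∞) ≠ 0) z j : ‖(z : ℕ → ℂ) j‖ ≤ 1 * ‖z‖))

lemma two_coord_sq_le (z : lp (fun _ : ℕ => ℂ) 2) (k : ℕ) (hk : 0 ≠ k) :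
    ‖z 0‖ ^ 2 + ‖z k‖ ^ 2 ≤ ‖z‖ ^ 2 := by
  have h := lp.sum_rpow_le_norm_rpow (p := 2) (by norm_num) z ({0, k} : Finset ℕ)
  rw [Finset.sum_pair hk] at h
  have ht : (2:ℝ≥0∞).toReal = 2 := by norm_num
  rw [ht] at h
  simpa [Real.rpow_two] using h

lemma norm_e1 : ‖(lp.single 2 0 1 : lp (fun _ : ℕ => ℂ) 2)‖ = 1 := by
  have := lp.norm_single (p := 2) (E := fun _ : ℕ => ℂ)
    (by norm_num : (0:ℝ≥0∞) < 2) 0 (1:ℂ)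
  simpa using this

/-- **Byun's example: the image of a weak limit of biholomorphisms can exceed the
norm closure of the images.**  On the unit ball `B` of `ℓ²`, the maps
`f_k(z) = z + z₁² e_k` (first coordinate indexed by `0`, perturbation in slot
`k ≥ 1`) are biholomorphisms of `B` onto their images, converge coordinatewise
(weakly) to the identity, yet the closed ball about `(77/80)e₁` of radius
`1/100` lies in `B` while missing every image `f_k(B)`. -/
theorem weak_limit_image_gains
    (F : ℕ → lp (fun _ : ℕ => ℂ) 2 → lp (fun _ : ℕ => ℂ) 2)
    (hoff : ∀ k, 1 ≤ k → ∀ z : lp (fun _ : ℕ => ℂ) 2, ∀ j, j ≠ k → (F k z) j = z j)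
    (hdiag : ∀ k, 1 ≤ k → ∀ z : lp (fun _ : ℕ => ℂ) 2, (F k z) k = z k + (z 0) ^ 2) :
    (∀ k, 1 ≤ k →
      Set.InjOn (F k) (ball (0 : lp (fun _ : ℕ => ℂ) 2) 1) ∧
      DifferentiableOn ℂ (F k) (ball (0 : lp (fun _ : ℕ => ℂ) 2) 1)) ∧
    (∀ z ∈ ball (0 : lp (fun _ : ℕ => ℂ) 2) 1, ∀ j : ℕ,
      Tendsto (fun k => (F k z) j) atTop (nhds (z j))) ∧
    closedBall ((77 / 80 : ℂ) • (lp.single 2 0 1 : lp (fun _ : ℕ => ℂ) 2)) (1 / 100)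
      ⊆ ball (0 : lp (fun _ : ℕ => ℂ) 2) 1 ∧
    (∀ k, 1 ≤ k → ∀ z ∈ ball (0 : lp (fun _ : ℕ => ℂ) 2) 1,
      F k z ∉ closedBall ((77 / 80 : ℂ) • (lp.single 2 0 1 : lp (fun _ : ℕ => ℂ) 2))
        (1 / 100)) := by
  set c : lp (fun _ : ℕ => ℂ) 2 := (77 / 80 : ℂ) • (lp.single 2 0 1) with hc
  have hc0 : c 0 = (77 / 80 : ℂ) := by
    simp [hc, lp.coeFn_smul, lp.single_apply_self]
  have hck : ∀ k : ℕ, 1 ≤ k → c k = 0 := by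
    intro k hk
    have : (lp.single 2 0 (1:ℂ) : lp (fun _ : ℕ => ℂ) 2) k = 0 :=
      lp.single_apply_ne 2 0 1 (by omega)
    simp [hc, lp.coeFn_smul, this, Pi.single_apply, show k ≠ 0 by omega]
  have hnormc : ‖c‖ = 77 / 80 := by
    rw [hc, norm_smul, norm_e1, mul_one]
    rw [show (77/80 : ℂ) = ((77/80 : ℝ) : ℂ) by norm_num, Complex.norm_real]
    norm_num
  refine ⟨?_, ?_, ?_, ?_⟩
  · -- injectivity and differentiability
    intro k hk
    constructor
    · intro x _ y _ hxy
      have heq : ∀ j, x j = y j := by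
        intro j
        by_cases hj : j = k
        · rw [hj]
          have h0 : x 0 = y 0 := by
            have h := congrArg (fun w => w 0) hxy
            simpa [hoff k hk x 0 (by omega : (0:ℕ) ≠ k),
              hoff k hk y 0 (by omega : (0:ℕ) ≠ k)] using h
          have h := congrArg (fun w => w k) hxy
          simp only [hdiag k hk x, hdiag k hk y, h0] at h
          exact add_right_cancel h
        · have h := congrArg (fun w => w j) hxy
          simpa [hoff k hk x j hj, hoff k hk y j hj] using h
      exact lp.ext (funext heq)
    · have hFeq : ∀ z : lp (fun _ : ℕ => ℂ) 2,
          F k z = z + (evC 0 z) ^ 2 • lp.single 2 k 1 := by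
        intro z
        refine lp.ext (funext fun j => ?_)
        have hrhs : ((z + (evC 0 z) ^ 2 • lp.single 2 k 1 : lp (fun _ : ℕ => ℂ) 2)) j
            = z j + (z 0) ^ 2 * (lp.single 2 k (1:ℂ) : lp (fun _ : ℕ => ℂ) 2) j := by
          rfl
        show (F k z) j = _
        rw [hrhs]
        by_cases hj : j = k
        · rw [hj, hdiag k hk z, lp.single_apply_self]
          ring
        · rw [hoff k hk z j hj, lp.single_apply_ne (E := fun _ : ℕ => ℂ) 2 k 1 hj,
            mul_zero, add_zero]
      have hdiff : Differentiable ℂ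
          (fun z : lp (fun _ : ℕ => ℂ) 2 => z + (evC 0 z) ^ 2 • lp.single 2 k 1) :=
        differentiable_id.add ((((evC 0).differentiable).pow 2).smul_const _)
      exact fun x hx => ((hdiff x).congr_of_eventuallyEq
        (Filter.eventually_of_mem (isOpen_ball.mem_nhds hx)
          (fun y _ => hFeq y))).differentiableWithinAt
  · -- coordinatewise convergence
    intro z _ j
    have : ∀ᶠ k in atTop, (F k z) j = z j := by
      filter_upwards [eventually_ge_atTop (j + 1)] with k hkj
      exact hoff k (by omega) z j (by omega)
    exact Tendsto.congr' (this.mono fun k hk => hk.symm) tendsto_const_nhds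
  · -- the small closed ball lies in B
    intro w hw
    rw [mem_closedBall, dist_eq_norm] at hw
    rw [mem_ball_zero_iff]
    calc ‖w‖ = ‖w - c + c‖ := by rw [sub_add_cancel]
    _ ≤ ‖w - c‖ + ‖c‖ := norm_add_le _ _
    _ ≤ 1 / 100 + 77 / 80 := by rw [hnormc]; linarith
    _ < 1 := by norm_num
  · -- images avoid the small closed ball
    intro k hk z hz habs
    rw [mem_closedBall, dist_eq_norm] at habs
    rw [mem_ball_zero_iff] at hz
    have h0 : ‖z 0 - (77 / 80 : ℂ)‖ ≤ 1 / 100 := by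
      have := lp.norm_apply_le_norm (by norm_num : (2:ℝ≥0∞) ≠ 0) (F k z - c) 0
      rw [lp.coeFn_sub] at this
      simpa [hoff k hk z 0 (by omega), hc0] using this.trans habs
    have hkco : ‖z k + (z 0) ^ 2‖ ≤ 1 / 100 := by
      have := lp.norm_apply_le_norm (by norm_num : (2:ℝ≥0∞) ≠ 0) (F k z - c) k
      rw [lp.coeFn_sub] at this
      simpa [hdiag k hk z, hck k hk] using this.trans habs
    have hn78 : ‖(77 / 80 : ℂ)‖ = 77 / 80 := by
      rw [show (77/80 : ℂ) = ((77/80 : ℝ) : ℂ) by norm_num, Complex.norm_real]; norm_num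
    have hz0 : (77 : ℝ) / 80 - 1 / 100 ≤ ‖z 0‖ := by
      have h := norm_sub_norm_le ((77/80 : ℂ)) (z 0)
      rw [norm_sub_rev, hn78] at h
      linarith
    have hzk : ‖z 0‖ ^ 2 - 1 / 100 ≤ ‖z k‖ := by
      have h1 : ‖(z 0) ^ 2‖ ≤ ‖z k + (z 0) ^ 2‖ + ‖z k‖ := by
        have := norm_sub_le (z k + (z 0) ^ 2) (z k)
        simpa [add_sub_cancel_left] using this
      have h2 : ‖(z 0) ^ 2‖ = ‖z 0‖ ^ 2 := norm_pow _ _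
      linarith
    have hsum := two_coord_sq_le z k (by omega)
    have hzsq : ‖z‖ ^ 2 < 1 := by
      have h := norm_nonneg z
      nlinarith
    have h0' : (0:ℝ) ≤ ‖z 0‖ := norm_nonneg _
    nlinarith [norm_nonneg (z k), sq_nonneg (‖z 0‖ - 1), sq_nonneg ‖z 0‖]
end

section
/- Let Z be a separable complex Banach space with a Schauder basis (e_k), Y = Z* its dual, and W a bounded subset of Y. Let Ω be a domain in a separable Banach space X and (f_j) a sequence of holomorphic maps Ω → Y with range in W. Then there is a subsequence (f_{j_m}) and a map f : Ω → Y such that for every z ∈ Ω and every k, the scalar sequence f_{j_m}(z)(e_k) converges to f(z)(e_k); i.e. f_{j_m}(z) → f(z) in the weak-* topology for every z ∈ Ω. -/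
open Set Metric Filter Topology

/-- Lipschitz-type estimate for bounded holomorphic scalar functions on a ball in a
complex Banach space, obtained via the one-dimensional Schwarz lemma along complex lines. -/
lemma lip_est {X : Type*} [NormedAddCommGroup X] [NormedSpace ℂ X]
    {h : X → ℂ} {z₀ : X} {r K : ℝ} (hr : 0 < r)
    (hd : DifferentiableOn ℂ h (ball z₀ r))
    (hb : ∀ x ∈ ball z₀ r, ‖h x‖ ≤ K)
    {x d : X} (hx : x ∈ ball z₀ (r / 4)) (hdd : d ∈ ball z₀ (r / 4)) :
    ‖h x - h d‖ ≤ 4 * (2 * K + 1) / r * ‖x - d‖ := by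
  have hK : 0 ≤ K := le_trans (norm_nonneg _) (hb x (mem_ball.2 (lt_of_lt_of_le hx (by linarith))))
  rcases eq_or_ne x d with rfl | hne
  · simp [mul_nonneg, div_nonneg, hr.le, hK, norm_nonneg]
  have ht : (0 : ℝ) < ‖x - d‖ := by
    simpa [sub_eq_zero] using (norm_pos_iff.2 (sub_ne_zero.2 hne))
  set t : ℝ := ‖x - d‖ with htdef
  have htlt : t < r / 2 := by
    have h1 : dist x z₀ < r / 4 := hx
    have h2 : dist d z₀ < r / 4 := hdd
    calc t = ‖(x - z₀) - (d - z₀)‖ := by rw [htdef]; congr 1; abel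
      _ ≤ ‖x - z₀‖ + ‖d - z₀‖ := norm_sub_le _ _
      _ < r / 2 := by
          have h1' : ‖x - z₀‖ < r / 4 := by simpa [mem_ball, dist_eq_norm] using hx
          have h2' : ‖d - z₀‖ < r / 4 := by simpa [mem_ball, dist_eq_norm] using hdd
          linarith
  set R₁ : ℝ := (3 * r / 4) / t with hR₁def
  have hR₁pos : 0 < R₁ := div_pos (by linarith) ht
  set φ : ℂ → X := fun s => d + s • (x - d) with hφdef
  have hφmaps : MapsTo φ (ball (0 : ℂ) R₁) (ball z₀ r) := by
    intro s hs
    have hs' : ‖s‖ < R₁ := by simpa [mem_ball, dist_eq_norm] using hs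
    have hkey : ‖φ s - z₀‖ ≤ ‖d - z₀‖ + ‖s‖ * t := by
      have heq : φ s - z₀ = (d - z₀) + s • (x - d) := by
        show d + s • (x - d) - z₀ = (d - z₀) + s • (x - d)
        abel
      rw [heq]
      refine (norm_add_le _ _).trans ?_
      simp [norm_smul]
      exact le_rfl
    have hdz : ‖d - z₀‖ < r / 4 := by simpa [mem_ball, dist_eq_norm] using hdd
    have h2 : ‖s‖ * t < R₁ * t := mul_lt_mul_of_pos_right hs' ht
    have h3 : R₁ * t = 3 * r / 4 := by
      rw [hR₁def]; field_simp
    rw [mem_ball, dist_eq_norm]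
    linarith
  have hφdiff : Differentiable ℂ φ := by
    exact (differentiable_const d).add (differentiable_id.smul_const (x - d))
  have hcomp : DifferentiableOn ℂ (h ∘ φ) (ball (0 : ℂ) R₁) :=
    hd.comp hφdiff.differentiableOn hφmaps
  have hmaps2 : MapsTo (h ∘ φ) (ball (0 : ℂ) R₁) (ball ((h ∘ φ) 0) (2 * K + 1)) := by
    intro s hs
    have h1 : ‖h (φ s)‖ ≤ K := hb _ (hφmaps hs)
    have h0 : ‖h (φ 0)‖ ≤ K := hb _ (hφmaps (mem_ball_self hR₁pos))
    have : dist ((h ∘ φ) s) ((h ∘ φ) 0) ≤ 2 * K := by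
      rw [dist_eq_norm]
      calc ‖h (φ s) - h (φ 0)‖ ≤ ‖h (φ s)‖ + ‖h (φ 0)‖ := norm_sub_le _ _
        _ ≤ 2 * K := by linarith
    exact mem_ball.2 (lt_of_le_of_lt this (by linarith))
  have h1mem : (1 : ℂ) ∈ ball (0 : ℂ) R₁ := by
    simp only [mem_ball, dist_zero_right, norm_one]
    rw [hR₁def, lt_div_iff₀ ht]
    linarith
  have key := Complex.dist_le_div_mul_dist_of_mapsTo_ball hcomp (hmaps2.mono_right ball_subset_closedBall) h1mem
  have hφ1 : φ 1 = x := by simp [hφdef]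
  have hφ0 : φ 0 = d := by simp [hφdef]
  have hd10 : dist (1 : ℂ) 0 = 1 := by simp
  rw [Function.comp_apply, Function.comp_apply, hφ1, hφ0, hd10, mul_one, dist_eq_norm] at key
  calc ‖h x - h d‖ ≤ (2 * K + 1) / R₁ := key
    _ = (2 * K + 1) * (4 / (3 * r)) * t := by
        rw [hR₁def]
        field_simp
    _ ≤ 4 * (2 * K + 1) / r * t := by
        have step : (2 * K + 1) * (4 / (3 * r)) ≤ 4 * (2 * K + 1) / r := by
          rw [show (2 * K + 1) * (4 / (3 * r)) = 4 * (2 * K + 1) / (3 * r) by ring]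
          gcongr
          all_goals linarith
        exact mul_le_mul_of_nonneg_right step ht.le

/-- A sequence that is uniformly approximated by Cauchy sequences is Cauchy. -/
lemma cauchy_of_approx {G : ℕ → ℂ}
    (h : ∀ ε > (0 : ℝ), ∃ H : ℕ → ℂ, CauchySeq H ∧ ∀ m, dist (G m) (H m) ≤ ε) :
    CauchySeq G := by
  rw [Metric.cauchySeq_iff]
  intro ε hε
  obtain ⟨H, hH, happ⟩ := h (ε / 4) (by linarith)
  rw [Metric.cauchySeq_iff] at hH
  obtain ⟨N, hN⟩ := hH (ε / 4) (by linarith)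
  refine ⟨N, fun m hm n hn => ?_⟩
  calc dist (G m) (G n) ≤ dist (G m) (H m) + dist (H m) (H n) + dist (H n) (G n) :=
        dist_triangle4 _ _ _ _
    _ < ε / 4 + ε / 4 + ε / 4 + ε / 4 := by
        have := hN m hm n hn
        have h1 := happ m
        have h2 := happ n
        rw [dist_comm (H n) (G n)] at *
        linarith [happ n, dist_comm (H n) (G n) ▸ (happ n)]
    _ = ε := by ring

/-- **A weak-* Montel theorem for dual-space valued holomorphic maps.**
Let `Z` be a separable complex Banach space with a Schauder basis `(e_k)`,
`Y = Z*` its dual, `W ⊆ Y` bounded, `Ω` a domain in a separable Banach space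
`X`, and `(f_j)` a sequence of holomorphic maps `Ω → Y` with range in `W`.
Then some subsequence `(f_{j_m})` converges at every point of `Ω` in the weak-*
topology: there is `f : Ω → Y` with `f_{j_m}(z)(w) → f(z)(w)` for all `z ∈ Ω`
and `w ∈ Z` (in particular at each basis vector `e_k`). -/
theorem weak_star_montel
    {X : Type*} [NormedAddCommGroup X] [NormedSpace ℂ X] [CompleteSpace X]
    [TopologicalSpace.SeparableSpace X]
    {Z : Type*} [NormedAddCommGroup Z] [NormedSpace ℂ Z] [CompleteSpace Z]
    [TopologicalSpace.SeparableSpace Z]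
    (e : ℕ → Z)
    (hbasis : ∀ z : Z, ∃! a : ℕ → ℂ,
      Tendsto (fun n => ∑ k ∈ Finset.range n, a k • e k) atTop (nhds z))
    (Ω : Set X) (hΩ : IsOpen Ω) (hΩconn : IsConnected Ω)
    (W : Set (Z →L[ℂ] ℂ)) (hW : Bornology.IsBounded W)
    (f : ℕ → X → (Z →L[ℂ] ℂ)) (hol : ∀ j, DifferentiableOn ℂ (f j) Ω)
    (hrange : ∀ j, ∀ z ∈ Ω, f j z ∈ W) :
    ∃ σ : ℕ → ℕ, StrictMono σ ∧
      ∃ g : X → (Z →L[ℂ] ℂ),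
        ∀ z ∈ Ω, ∀ w : Z,
          Tendsto (fun m => f (σ m) z w) atTop (nhds (g z w)) := by
  classical
  -- uniform bound on the range
  obtain ⟨M, hM⟩ := hW.exists_norm_le
  obtain ⟨z₀, hz₀⟩ := hΩconn.nonempty
  have hM0 : 0 ≤ M := le_trans (norm_nonneg _) (hM _ (hrange 0 z₀ hz₀))
  have hbd : ∀ j, ∀ z ∈ Ω, ∀ w : Z, ‖f j z w‖ ≤ M * ‖w‖ := fun j z hz w =>
    le_trans ((f j z).le_opNorm w)
      (mul_le_mul_of_nonneg_right (hM _ (hrange j z hz)) (norm_nonneg w))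
  -- countable dense sequences
  haveI : SecondCountableTopology X := UniformSpace.secondCountable_of_separable X
  haveI : Nonempty ↥Ω := ⟨⟨z₀, hz₀⟩⟩
  set u : ℕ → ↥Ω := TopologicalSpace.denseSeq ↥Ω with hudef
  have hu : DenseRange u := TopologicalSpace.denseRange_denseSeq ↥Ω
  set c : ℕ → Z := TopologicalSpace.denseSeq Z with hcdef
  have hc : DenseRange c := TopologicalSpace.denseRange_denseSeq Z
  -- diagonal extraction via sequential compactness of a countable product of closed balls
  set s : Set ((ℕ × ℕ) → ℂ) := Set.pi univ fun p => closedBall (0 : ℂ) (M * ‖c p.2‖) with hsdef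
  have hs : IsCompact s := isCompact_univ_pi fun p => isCompact_closedBall _ _
  set F : ℕ → (ℕ × ℕ) → ℂ := fun j p => f j (u p.1 : X) (c p.2) with hFdef
  have hF : ∀ j, F j ∈ s := by
    intro j p _
    simpa [mem_closedBall, dist_eq_norm] using hbd j (u p.1 : X) (u p.1).2 (c p.2)
  obtain ⟨a, -, σ, hσ, hconv⟩ := hs.tendsto_subseq hF
  have hptc : ∀ p : ℕ × ℕ, Tendsto (fun m => f (σ m) (u p.1 : X) (c p.2)) atTop (𝓝 (a p)) := by
    intro p
    exact (tendsto_pi_nhds.mp hconv) p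
  -- Step A: Cauchy at every dense point, every vector
  have stepA : ∀ n : ℕ, ∀ w : Z, CauchySeq fun m => f (σ m) (u n : X) w := by
    intro n w
    apply cauchy_of_approx
    intro ε hε
    obtain ⟨k, hk⟩ := Metric.denseRange_iff.mp hc w (ε / (M + 1)) (by positivity)
    refine ⟨fun m => f (σ m) (u n : X) (c k), (hptc (n, k)).cauchySeq, fun m => ?_⟩
    rw [dist_eq_norm, ← map_sub]
    calc ‖f (σ m) (u n : X) (w - c k)‖ ≤ M * ‖w - c k‖ :=
          hbd (σ m) _ (u n).2 _
      _ ≤ M * (ε / (M + 1)) := by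
          apply mul_le_mul_of_nonneg_left _ hM0
          rw [← dist_eq_norm]
          exact hk.le
      _ ≤ ε := by
          rw [mul_div_assoc']
          rw [div_le_iff₀ (by linarith)]
          nlinarith
  -- Step B: Cauchy at every point of Ω, every vector
  have stepB : ∀ z ∈ Ω, ∀ w : Z, CauchySeq fun m => f (σ m) z w := by
    intro z hz w
    obtain ⟨r, hr, hball⟩ := Metric.isOpen_iff.mp hΩ z hz
    set K : ℝ := M * ‖w‖ with hKdef
    have hK0 : 0 ≤ K := mul_nonneg hM0 (norm_nonneg w)
    set C : ℝ := 4 * (2 * K + 1) / r with hCdef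
    have hC : 0 < C := by positivity
    apply cauchy_of_approx
    intro ε hε
    set δ : ℝ := min (r / 8) (ε / C) with hδdef
    have hδpos : 0 < δ := lt_min (by linarith) (by positivity)
    obtain ⟨n, hn⟩ := Metric.denseRange_iff.mp hu ⟨z, hz⟩ δ hδpos
    have hdist : dist z (u n : X) < δ := by
      rw [Subtype.dist_eq] at hn
      exact hn
    refine ⟨fun m => f (σ m) (u n : X) w, stepA n w, fun m => ?_⟩
    have hdiff : DifferentiableOn ℂ (fun x => f (σ m) x w) (ball z r) :=
      ((hol (σ m)).mono hball).clm_apply (differentiableOn_const w)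
    have hbnd : ∀ x ∈ ball z r, ‖f (σ m) x w‖ ≤ K := fun x hx =>
      hbd (σ m) x (hball hx) w
    have hzmem : z ∈ ball z (r / 4) := mem_ball_self (by linarith)
    have hunmem : (u n : X) ∈ ball z (r / 4) := by
      rw [mem_ball, dist_comm]
      exact lt_of_lt_of_le hdist ((min_le_left _ _).trans (by linarith))
    have hlip := lip_est hr hdiff hbnd hzmem hunmem
    rw [dist_eq_norm]
    calc ‖f (σ m) z w - f (σ m) (u n : X) w‖ ≤ C * ‖z - (u n : X)‖ := hlip
      _ ≤ C * δ := by
          apply mul_le_mul_of_nonneg_left _ hC.le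
          rw [← dist_eq_norm]
          exact hdist.le
      _ ≤ C * (ε / C) := mul_le_mul_of_nonneg_left (min_le_right _ _) hC.le
      _ = ε := by field_simp
  -- Construct the limit functional at each point of Ω
  have key : ∀ z : X, z ∈ Ω → ∃ L : Z →L[ℂ] ℂ,
      ∀ w : Z, Tendsto (fun m => f (σ m) z w) atTop (𝓝 (L w)) := by
    intro z hz
    have hex : ∀ w : Z, ∃ l : ℂ, Tendsto (fun m => f (σ m) z w) atTop (𝓝 l) := fun w =>
      cauchySeq_tendsto_of_complete (stepB z hz w)
    choose l hl using hex
    have hadd : ∀ w₁ w₂ : Z, l (w₁ + w₂) = l w₁ + l w₂ := by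
      intro w₁ w₂
      refine tendsto_nhds_unique (hl (w₁ + w₂)) ?_
      have := (hl w₁).add (hl w₂)
      simpa [map_add] using this
    have hsmul : ∀ (s : ℂ) (w : Z), l (s • w) = s • l w := by
      intro s w
      refine tendsto_nhds_unique (hl (s • w)) ?_
      have := (hl w).const_smul s
      simpa [map_smul] using this
    refine ⟨LinearMap.mkContinuous
      { toFun := l, map_add' := hadd, map_smul' := hsmul } M ?_, hl⟩
    intro w
    exact le_of_tendsto (hl w).norm (Eventually.of_forall fun m => hbd (σ m) z hz w)
  choose! g hg using key
  exact ⟨σ, hσ, g, fun z hz w => hg z hz w⟩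
end
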